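/- There exists a constant R > 1 such that for all g₁, g₂ ∈ SL(2,ℂ) satisfying (1/2) ≤ ‖g₁‖_op / ‖g₂‖_op ≤ 2 and d(L(g₁), L(g₂)) ≤ ‖g₁‖_op⁻², one has d_G(g₁, g₂) ≤ R, where d_G is the left-invariant Riemannian distance on SL(2,ℂ). More concretely, under these hypotheses the matrix g₂⁻¹ g₁ satisfies ‖g₂⁻¹ g₁‖_op ≤ √5 + √8. -/

import Mathlib

noncomputable section

/-- `ℂ²` with the standard Hermitian norm. -/
abbrev C2 := EuclideanSpace ℂ (Fin 2)

/-- The distance between the lines spanned by `z` and `w`, computed on representatives: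
`d(zℂ, wℂ) = |z₁w₂ - z₂w₁| / (‖z‖‖w‖)`. -/
def dCP (z w : C2) : ℝ := ‖z 0 * w 1 - z 1 * w 0‖ / (‖z‖ * ‖w‖)

/-- First standard basis vector of `ℂ²`. -/
def e1 : C2 := WithLp.toLp 2 ![1, 0]

/-- Second standard basis vector of `ℂ²`. -/
def e2 : C2 := WithLp.toLp 2 ![0, 1]

/-- The operator norm of a `2×2` complex matrix acting on `ℂ²` with the Hermitian norm. -/
def opn (A : Matrix (Fin 2) (Fin 2) ℂ) : ℝ := ‖Matrix.toEuclideanCLM (𝕜 := ℂ) A‖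

/-- The action of a matrix on a vector of `ℂ²`. -/
def mulVecE (A : Matrix (Fin 2) (Fin 2) ℂ) (z : C2) : C2 := Matrix.toEuclideanCLM (𝕜 := ℂ) A z

/-- `ReprL g L` says that the nonzero vector `L` represents the attracting direction
`L(g)` of `g`: either ‖g‖_op = 1 and L = e₁, or ‖g‖_op > 1 and L = Ue₁ for a singular
value decomposition g = U·diag(‖g‖_op, ‖g‖_op⁻¹)·V with U, V ∈ SU(2). -/
def ReprL (g : Matrix.SpecialLinearGroup (Fin 2) ℂ) (L : C2) : Prop :=
  (opn (↑g) = 1 ∧ L = e1) ∨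
  (1 < opn (↑g) ∧ ∃ U V : Matrix (Fin 2) (Fin 2) ℂ,
    U ∈ Matrix.specialUnitaryGroup (Fin 2) ℂ ∧
    V ∈ Matrix.specialUnitaryGroup (Fin 2) ℂ ∧
    (↑g : Matrix (Fin 2) (Fin 2) ℂ) =
      U * Matrix.diagonal ![((opn (↑g) : ℝ) : ℂ), (((opn (↑g))⁻¹ : ℝ) : ℂ)] * V ∧
    L = mulVecE U e1)

/-! Write `gᵢ = Uᵢ Dᵢ Vᵢ` with `Dᵢ = diag(σᵢ, σᵢ⁻¹)`. Up to unitary factors on both sides,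
`g₂⁻¹ g₁` is `D₂⁻¹ W D₁` with `W = U₂⋆U₁` unitary, so its entries are `W_ij` scaled by
`σ₁/σ₂, 1/(σ₁σ₂), σ₁σ₂, σ₂/σ₁`. All entries of `W` have modulus at most `1`, and since
`U₂ ∈ SU(2)` the entry `W₁₀` is, up to sign, the determinant of the unit vectors `U₁e₁, U₂e₁`,
i.e. the projective distance of `L(g₁)` and `L(g₂)`, which is at most `σ₁⁻²`. Hence the entries
are bounded by `2, 1, 2, 2`, and the Frobenius norm gives `‖g₂⁻¹g₁‖ ≤ √13 ≤ √5 + √8`. If one of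
the norms is `1` there is no SVD to use, but then the other is at most `2` and
`‖g₂⁻¹g₁‖ ≤ ‖adj g₂‖ ‖g₁‖ ≤ √2 · 2`. Finally `d_G(g₁, g₂) = d_G(g₂⁻¹g₁, 1)` by left invariance,
and a continuous function is bounded on the compact ball of radius `√5 + √8`. -/

open Matrix
open scoped MatrixGroups

section

open scoped Matrix.Norms.L2Operator

namespace Matrix

section RCLike

variable {𝕜 n : Type*} [RCLike 𝕜] [Fintype n] [DecidableEq n]

lemma toEuclideanCLM_apply_apply (A : Matrix n n 𝕜) (x : EuclideanSpace 𝕜 n) (i : n) :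
    toEuclideanCLM (n := n) (𝕜 := 𝕜) A x i = ∑ j, A i j * x j := by
  simp [mulVec, dotProduct]

lemma l2_opNorm_le_sqrt_sum_norm_sq (A : Matrix n n 𝕜) :
    ‖A‖ ≤ √(∑ i, ∑ j, ‖A i j‖ ^ 2) := by
  refine (toEuclideanCLM (n := n) (𝕜 := 𝕜) A).opNorm_le_bound (by positivity) fun x => ?_
  rw [← sq_le_sq₀ (by positivity) (by positivity), mul_pow, Real.sq_sqrt (by positivity),
    EuclideanSpace.norm_sq_eq, EuclideanSpace.norm_sq_eq, Finset.sum_mul]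
  gcongr with i
  calc ‖toEuclideanCLM (n := n) (𝕜 := 𝕜) A x i‖ ^ 2 ≤ (∑ j, ‖A i j‖ * ‖x j‖) ^ 2 := by
        rw [toEuclideanCLM_apply_apply]
        gcongr
        exact (norm_sum_le _ _).trans_eq (by simp only [norm_mul])
    _ ≤ (∑ j, ‖A i j‖ ^ 2) * ∑ j, ‖x j‖ ^ 2 := Finset.sum_mul_sq_le_sq_mul_sq _ _ _

lemma sum_norm_sq_col_le_l2_opNorm_sq (A : Matrix n n 𝕜) (j : n) :
    ∑ i, ‖A i j‖ ^ 2 ≤ ‖A‖ ^ 2 := by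
  have h := (toEuclideanCLM (n := n) (𝕜 := 𝕜) A).le_opNorm (EuclideanSpace.single j 1)
  rw [PiLp.norm_single, norm_one, mul_one] at h
  calc ∑ i, ‖A i j‖ ^ 2
        = ‖toEuclideanCLM (n := n) (𝕜 := 𝕜) A (EuclideanSpace.single j 1)‖ ^ 2 := by
          simp [EuclideanSpace.norm_sq_eq, toEuclideanCLM_apply_apply]
    _ ≤ ‖A‖ ^ 2 := pow_le_pow_left₀ (norm_nonneg _) h 2

lemma l2_opNorm_adjugate_le (A : Matrix (Fin 2) (Fin 2) 𝕜) : ‖adjugate A‖ ≤ √2 * ‖A‖ := by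
  refine (l2_opNorm_le_sqrt_sum_norm_sq _).trans ?_
  have h₀ := sum_norm_sq_col_le_l2_opNorm_sq A 0
  have h₁ := sum_norm_sq_col_le_l2_opNorm_sq A 1
  rw [← Real.sqrt_sq (norm_nonneg A), ← Real.sqrt_mul zero_le_two]
  gcongr
  simp only [adjugate_fin_two, Fin.sum_univ_two, of_apply, cons_val', cons_val_zero, cons_val_one,
    empty_val', cons_val_fin_one, norm_neg] at h₀ h₁ ⊢
  linarith

lemma l2_opNorm_inv_mul_eq_of_unitary {U₁ V₁ U₂ V₂ : Matrix n n 𝕜}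
    (hU₂ : U₂ ∈ unitaryGroup n 𝕜) (hV₁ : V₁ ∈ unitaryGroup n 𝕜) (hV₂ : V₂ ∈ unitaryGroup n 𝕜)
    (D₁ D₂ : Matrix n n 𝕜) :
    ‖(U₂ * D₂ * V₂)⁻¹ * (U₁ * D₁ * V₁)‖ = ‖D₂⁻¹ * (star U₂ * U₁) * D₁‖ := by
  have inv_eq_star {U : Matrix n n 𝕜} (hU : U ∈ unitaryGroup n 𝕜) : U⁻¹ = star U :=
    inv_eq_left_inv (Unitary.star_mul_self_of_mem hU)
  rw [mul_inv_rev, mul_inv_rev, inv_eq_star hU₂, inv_eq_star hV₂]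
  calc _ = ‖star V₂ * (D₂⁻¹ * (star U₂ * U₁) * D₁) * V₁‖ := by simp only [Matrix.mul_assoc]
    _ = _ := by
      rw [CStarRing.norm_mul_mem_unitary _ hV₁,
        CStarRing.norm_mem_unitary_mul _ (Unitary.star_mem hV₂)]

end RCLike

variable {n R : Type*} [Fintype n] [DecidableEq n] [CommRing R]

lemma SpecialLinearGroup.coe_inv_eq_inv (g : SpecialLinearGroup n R) :
    ((g⁻¹ : SpecialLinearGroup n R) : Matrix n n R) = (g : Matrix n n R)⁻¹ :=
  (inv_eq_left_inv (by
    rw [← SpecialLinearGroup.coe_mul, inv_mul_cancel, SpecialLinearGroup.coe_one])).symm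

lemma star_eq_adjugate_of_mem_specialUnitaryGroup [StarRing R] {U : Matrix n n R}
    (hU : U ∈ specialUnitaryGroup n R) : star U = adjugate U := by
  rw [mem_specialUnitaryGroup_iff] at hU
  rw [← inv_eq_left_inv (Unitary.star_mul_self_of_mem hU.1), inv_def, hU.2]
  simp

end Matrix

local notation "M₂" => Matrix (Fin 2) (Fin 2) ℂ

lemma opn_eq_norm (A : M₂) : opn A = ‖A‖ := rfl

def svDiag (σ : ℝ) : M₂ := diagonal ![(σ : ℂ), ((σ⁻¹ : ℝ) : ℂ)]

lemma svDiag_inv {σ : ℝ} (hσ : σ ≠ 0) :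
    (svDiag σ)⁻¹ = diagonal ![((σ⁻¹ : ℝ) : ℂ), (σ : ℂ)] := by
  refine inv_eq_left_inv ?_
  rw [svDiag, diagonal_mul_diagonal, ← diagonal_one]
  congr 1 with i
  fin_cases i <;> simp [hσ]

lemma norm_svDiag_inv_mul_mul_svDiag_le {σ₁ σ₂ : ℝ} (hσ₁ : 1 ≤ σ₁) (hσ₂ : 1 ≤ σ₂)
    (h₁₂ : σ₁ ≤ 2 * σ₂) (h₂₁ : σ₂ ≤ 2 * σ₁) {W : M₂} (hW : W ∈ unitaryGroup (Fin 2) ℂ)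
    (hW₁₀ : ‖W 1 0‖ ≤ (σ₁ ^ 2)⁻¹) :
    ‖(svDiag σ₂)⁻¹ * W * svDiag σ₁‖ ≤ √13 := by
  have hσ₁₀ : 0 < σ₁ := by linarith
  have hσ₂₀ : 0 < σ₂ := by linarith
  have hW₁ (i j : Fin 2) : ‖W i j‖ ≤ 1 := entry_norm_bound_of_unitary hW i j
  refine (l2_opNorm_le_sqrt_sum_norm_sq _).trans (Real.sqrt_le_sqrt ?_)
  rw [svDiag_inv hσ₂₀.ne', svDiag]
  simp only [mul_diagonal, diagonal_mul, Fin.sum_univ_two, norm_mul, Complex.norm_real,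
    Real.norm_eq_abs, abs_of_pos hσ₁₀, abs_of_pos hσ₂₀, abs_of_pos (inv_pos.2 hσ₁₀),
    abs_of_pos (inv_pos.2 hσ₂₀), cons_val_zero, cons_val_one]
  have h₀₀ : σ₂⁻¹ * ‖W 0 0‖ * σ₁ ≤ 2 :=
    calc _ ≤ σ₂⁻¹ * 1 * σ₁ := by gcongr; exact hW₁ 0 0
      _ = σ₁ / σ₂ := by ring
      _ ≤ 2 := by rw [div_le_iff₀ hσ₂₀]; exact h₁₂
  have h₀₁ : σ₂⁻¹ * ‖W 0 1‖ * σ₁⁻¹ ≤ 1 := by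
    simpa using mul_le_one₀ (mul_le_one₀ (inv_le_one_of_one_le₀ hσ₂) (norm_nonneg _) (hW₁ 0 1))
      (inv_pos.2 hσ₁₀).le (inv_le_one_of_one_le₀ hσ₁)
  have h₁₀ : σ₂ * ‖W 1 0‖ * σ₁ ≤ 2 :=
    calc _ ≤ σ₂ * (σ₁ ^ 2)⁻¹ * σ₁ := by gcongr
      _ = σ₂ / σ₁ := by field_simp
      _ ≤ 2 := by rw [div_le_iff₀ hσ₁₀]; exact h₂₁
  have h₁₁ : σ₂ * ‖W 1 1‖ * σ₁⁻¹ ≤ 2 :=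
    calc _ ≤ σ₂ * 1 * σ₁⁻¹ := by gcongr; exact hW₁ 1 1
      _ = σ₂ / σ₁ := by ring
      _ ≤ 2 := by rw [div_le_iff₀ hσ₁₀]; exact h₂₁
  have sq_le {x b : ℝ} (hx : x ≤ b) (h₀ : 0 ≤ x) : x ^ 2 ≤ b ^ 2 := pow_le_pow_left₀ h₀ hx 2
  linarith [sq_le h₀₀ (by positivity), sq_le h₀₁ (by positivity), sq_le h₁₀ (by positivity),
    sq_le h₁₁ (by positivity)]

lemma norm_e1 : ‖e1‖ = 1 := by
  simp [EuclideanSpace.norm_eq, e1]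

lemma mulVecE_e1_apply (U : M₂) (i : Fin 2) : mulVecE U e1 i = U i 0 := by
  fin_cases i <;> simp [mulVecE, e1]

lemma norm_mulVecE_e1 {U : M₂} (hU : U ∈ unitaryGroup (Fin 2) ℂ) : ‖mulVecE U e1‖ = 1 := by
  rw [mulVecE, ContinuousLinearMap.norm_map_of_mem_unitary (Unitary.map_mem _ hU), norm_e1]

lemma dCP_mulVecE_e1 {U₁ U₂ : M₂} (hU₁ : U₁ ∈ unitaryGroup (Fin 2) ℂ)
    (hU₂ : U₂ ∈ specialUnitaryGroup (Fin 2) ℂ) :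
    dCP (mulVecE U₁ e1) (mulVecE U₂ e1) = ‖(star U₂ * U₁) 1 0‖ := by
  rw [dCP, norm_mulVecE_e1 hU₁, norm_mulVecE_e1 (mem_specialUnitaryGroup_iff.1 hU₂).1,
    star_eq_adjugate_of_mem_specialUnitaryGroup hU₂, ← norm_neg]
  simp [mulVecE_e1_apply, adjugate_fin_two, mul_apply]
  ring_nf

lemma norm_inv_mul_le_of_svd {g₁ g₂ U₁ V₁ U₂ V₂ : M₂} {σ₁ σ₂ : ℝ} (hσ₁ : 1 ≤ σ₁)
    (hσ₂ : 1 ≤ σ₂) (h₁₂ : σ₁ ≤ 2 * σ₂) (h₂₁ : σ₂ ≤ 2 * σ₁)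
    (hU₁ : U₁ ∈ unitaryGroup (Fin 2) ℂ) (hV₁ : V₁ ∈ unitaryGroup (Fin 2) ℂ)
    (hU₂ : U₂ ∈ specialUnitaryGroup (Fin 2) ℂ) (hV₂ : V₂ ∈ unitaryGroup (Fin 2) ℂ)
    (hg₁ : g₁ = U₁ * svDiag σ₁ * V₁) (hg₂ : g₂ = U₂ * svDiag σ₂ * V₂)
    (hd : dCP (mulVecE U₁ e1) (mulVecE U₂ e1) ≤ (σ₁ ^ 2)⁻¹) :
    ‖g₂⁻¹ * g₁‖ ≤ √13 := by
  have hU₂' := (mem_specialUnitaryGroup_iff.1 hU₂).1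
  rw [hg₁, hg₂, l2_opNorm_inv_mul_eq_of_unitary hU₂' hV₁ hV₂]
  rw [dCP_mulVecE_e1 hU₁ hU₂] at hd
  exact norm_svDiag_inv_mul_mul_svDiag_le hσ₁ hσ₂ h₁₂ h₂₁ (mul_mem (Unitary.star_mem hU₂') hU₁) hd

lemma norm_coe_inv_mul_le_of_opn_mul_le (g₁ g₂ : SL(2, ℂ)) (h : opn g₁ * opn g₂ ≤ 2) :
    ‖(↑(g₂⁻¹ * g₁) : M₂)‖ ≤ √8 :=
  calc _ ≤ ‖adjugate (g₂ : M₂)‖ * ‖(g₁ : M₂)‖ := by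
        simpa only [Matrix.SpecialLinearGroup.coe_mul, Matrix.SpecialLinearGroup.coe_inv] using
          norm_mul_le _ _
    _ ≤ √2 * ‖(g₂ : M₂)‖ * ‖(g₁ : M₂)‖ := by gcongr; exact l2_opNorm_adjugate_le _
    _ ≤ √2 * 2 := by rw [mul_assoc, mul_comm ‖(g₂ : M₂)‖]; gcongr; exact h
    _ = √8 := by
      rw [show (8 : ℝ) = 2 * 2 ^ 2 by norm_num, Real.sqrt_mul zero_le_two,
        Real.sqrt_sq zero_le_two]

lemma one_le_opn_of_reprL {g : SL(2, ℂ)} {L : C2} (h : ReprL g L) : 1 ≤ opn g := by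
  rcases h with ⟨h, -⟩ | ⟨h, -⟩
  exacts [h.ge, h.le]

lemma sqrt_thirteen_le : √13 ≤ √5 + √8 := by
  rw [Real.sqrt_le_left (by positivity), add_sq, Real.sq_sqrt (by norm_num),
    Real.sq_sqrt (by norm_num)]
  nlinarith [Real.sqrt_nonneg 5, Real.sqrt_nonneg 8]

lemma opn_coe_inv_mul_le_of_reprL {g₁ g₂ : SL(2, ℂ)} {L₁ L₂ : C2}
    (h₁ : ReprL g₁ L₁) (h₂ : ReprL g₂ L₂) (h₁₂ : opn g₁ ≤ 2 * opn g₂)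
    (h₂₁ : opn g₂ ≤ 2 * opn g₁) (hd : dCP L₁ L₂ ≤ (opn g₁ ^ 2)⁻¹) :
    opn ↑(g₂⁻¹ * g₁) ≤ √5 + √8 := by
  have hσ₁ := one_le_opn_of_reprL h₁
  have hσ₂ := one_le_opn_of_reprL h₂
  have sqrt_eight_le : √8 ≤ √5 + √8 := le_add_of_nonneg_left (Real.sqrt_nonneg 5)
  rcases h₂ with ⟨h₂, -⟩ | ⟨-, U₂, V₂, hU₂, hV₂, hg₂, rfl⟩
  · refine (norm_coe_inv_mul_le_of_opn_mul_le g₁ g₂ ?_).trans sqrt_eight_le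
    rw [h₂]; linarith
  rcases h₁ with ⟨h₁, -⟩ | ⟨-, U₁, V₁, hU₁, hV₁, hg₁, rfl⟩
  · refine (norm_coe_inv_mul_le_of_opn_mul_le g₁ g₂ ?_).trans sqrt_eight_le
    rw [h₁] at h₂₁ ⊢; linarith
  rw [opn_eq_norm, Matrix.SpecialLinearGroup.coe_mul, Matrix.SpecialLinearGroup.coe_inv_eq_inv]
  exact (norm_inv_mul_le_of_svd hσ₁ hσ₂ h₁₂ h₂₁ hU₁.1 hV₁.1 hU₂ hV₂.1 hg₁ hg₂ hd).trans
    sqrt_thirteen_le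

lemma exists_dist_le_of_opn_inv_mul_le (dG : M₂ → M₂ → ℝ)
    (hinv : ∀ h g g' : M₂, h.det = 1 → dG (h * g) (h * g') = dG g g')
    (hcont : Continuous fun p : M₂ × M₂ => dG p.1 p.2) (c : ℝ) :
    ∃ R, ∀ g₁ g₂ : SL(2, ℂ), opn ↑(g₂⁻¹ * g₁) ≤ c → dG g₁ g₂ ≤ R := by
  obtain ⟨R, hR⟩ := (isCompact_closedBall (0 : M₂) c).exists_bound_of_continuousOn
    (hcont.comp (continuous_id.prodMk continuous_const)).continuousOn
  refine ⟨R, fun g₁ g₂ h => ?_⟩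
  have hmem : (↑(g₂⁻¹ * g₁) : M₂) ∈ Metric.closedBall 0 c := by
    rwa [mem_closedBall_zero_iff]
  calc dG g₁ g₂ = dG (g₂ * ↑(g₂⁻¹ * g₁)) (g₂ * 1) := by
        rw [← Matrix.SpecialLinearGroup.coe_mul, mul_inv_cancel_left, Matrix.mul_one]
    _ = dG ↑(g₂⁻¹ * g₁) 1 := hinv _ _ _ g₂.prop
    _ ≤ R := (le_abs_self _).trans (hR _ hmem)

end

/-- If g₁, g₂ ∈ SL(2,ℂ) have comparable operator norms and nearby attracting directions
(d(L(g₁),L(g₂)) ≤ ‖g₁‖_op⁻²), then they lie within a bounded distance R of each other for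
any continuous left-invariant distance d_G on SL(2,ℂ); concretely, ‖g₂⁻¹g₁‖_op ≤ √5 + √8. -/
theorem stmt_7 (dG : Matrix (Fin 2) (Fin 2) ℂ → Matrix (Fin 2) (Fin 2) ℂ → ℝ)
    (hinv : ∀ h g g' : Matrix (Fin 2) (Fin 2) ℂ, h.det = 1 → dG (h * g) (h * g') = dG g g')
    (hcont : Continuous fun p : Matrix (Fin 2) (Fin 2) ℂ × Matrix (Fin 2) (Fin 2) ℂ =>
      dG p.1 p.2) :
    ∃ R : ℝ, 1 < R ∧
      ∀ (g₁ g₂ : Matrix.SpecialLinearGroup (Fin 2) ℂ) (L₁ L₂ : C2),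
        ReprL g₁ L₁ → ReprL g₂ L₂ →
        (1 / 2 : ℝ) ≤ opn (↑g₁) / opn (↑g₂) → opn (↑g₁) / opn (↑g₂) ≤ 2 →
        dCP L₁ L₂ ≤ ((opn (↑g₁)) ^ 2)⁻¹ →
        dG (↑g₁) (↑g₂) ≤ R ∧ opn (↑(g₂⁻¹ * g₁)) ≤ Real.sqrt 5 + Real.sqrt 8 := by
  obtain ⟨R, hR⟩ := exists_dist_le_of_opn_inv_mul_le dG hinv hcont (√5 + √8)
  refine ⟨max R 2, lt_max_of_lt_right one_lt_two, fun g₁ g₂ L₁ L₂ h₁ h₂ hlo hhi hd => ?_⟩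
  have hσ₂ : 0 < opn g₂ := one_pos.trans_le (one_le_opn_of_reprL h₂)
  have hbound := opn_coe_inv_mul_le_of_reprL h₁ h₂
    (by rw [div_le_iff₀ hσ₂] at hhi; linarith) (by rw [le_div_iff₀ hσ₂] at hlo; linarith) hd
  exact ⟨(hR g₁ g₂ hbound).trans (le_max_left _ _), hbound⟩
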